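/- For all n ≥ 1, −n + 2 ≤ Σ_{k=0}^{n} μ(2k+1)·(n+k+1)/(2k+1) ≤ n. -/

import Mathlib

/-! Since ⌊(n+k+1)/(2k+1)⌋ counts the odd multiples of 2k+1 up to 2n+1, swapping sums gives
∑ₖ μ(2k+1) ⌊(n+k+1)/(2k+1)⌋ = ∑_{m ≤ 2n+1 odd} ∑_{d ∣ m} μ(d) = 1. Dropping the integer parts
moves each term by less than 1, and not at all for k = 0 and k = n. -/

open Finset ArithmeticFunction ArithmeticFunction.Moebius

theorem sum_divisors_moebius (m : ℕ) : ∑ d ∈ m.divisors, (μ d : ℤ) = if m = 1 then 1 else 0 := by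
  rw [← coe_mul_zeta_apply, moebius_mul_coe_zeta, one_apply]

theorem sum_moebius_mul_card_multiples {s : Finset ℕ} (h0 : 0 ∉ s)
    (hs : ∀ m ∈ s, m.divisors ⊆ s) :
    ∑ d ∈ s, (μ d : ℤ) * #(s.filter (d ∣ ·)) = if 1 ∈ s then 1 else 0 := by
  have hdiv : ∀ m ∈ s, s.filter (· ∣ m) = m.divisors := fun m hm => by
    ext d
    simp only [mem_filter, Nat.mem_divisors]
    exact ⟨fun h => ⟨h.2, ne_of_mem_of_not_mem hm h0⟩,
      fun h => ⟨hs m hm (Nat.mem_divisors.mpr h), h.1⟩⟩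
  calc ∑ d ∈ s, (μ d : ℤ) * #(s.filter (d ∣ ·))
      = ∑ m ∈ s, ∑ d ∈ s.filter (· ∣ m), (μ d : ℤ) := by
        simp only [card_filter, Nat.cast_sum, mul_sum, sum_filter]
        rw [sum_comm]
        simp
    _ = ∑ m ∈ s, if m = 1 then 1 else 0 := sum_congr rfl fun m hm => by
        rw [hdiv m hm, sum_divisors_moebius]
    _ = if 1 ∈ s then 1 else 0 := sum_ite_eq' s 1 fun _ => 1

theorem filter_odd_range_eq_image (n : ℕ) :
    (range (2 * n + 2)).filter Odd = (range (n + 1)).image (fun k => 2 * k + 1) := by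
  ext m
  simp only [mem_filter, mem_range, mem_image, Nat.odd_iff]
  constructor
  · rintro ⟨hm, hodd⟩
    exact ⟨m / 2, by omega, by omega⟩
  · rintro ⟨k, hk, rfl⟩
    omega

theorem mul_odd_lt_iff (n k j : ℕ) :
    (2 * k + 1) * (2 * j + 1) < 2 * n + 2 ↔ j < (n + k + 1) / (2 * k + 1) := by
  rw [iff_comm, Nat.lt_iff_add_one_le, Nat.le_div_iff_mul_le (by omega)]
  constructor <;> intro h <;> nlinarith

theorem filter_dvd_filter_odd_range_eq_image (n k : ℕ) :
    ((range (2 * n + 2)).filter Odd).filter ((2 * k + 1) ∣ ·)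
      = (range ((n + k + 1) / (2 * k + 1))).image (fun j => (2 * k + 1) * (2 * j + 1)) := by
  ext m
  simp only [mem_filter, mem_range, mem_image]
  constructor
  · rintro ⟨⟨hm, hodd⟩, e, rfl⟩
    obtain ⟨j, rfl⟩ := (Nat.odd_mul.mp hodd).2
    exact ⟨j, (mul_odd_lt_iff n k j).mp hm, rfl⟩
  · rintro ⟨j, hj, rfl⟩
    exact ⟨⟨(mul_odd_lt_iff n k j).mpr hj, (odd_two_mul_add_one k).mul (odd_two_mul_add_one j)⟩,
      dvd_mul_right _ _⟩

theorem card_filter_dvd_filter_odd_range (n k : ℕ) :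
    #(((range (2 * n + 2)).filter Odd).filter ((2 * k + 1) ∣ ·)) = (n + k + 1) / (2 * k + 1) := by
  rw [filter_dvd_filter_odd_range_eq_image, card_image_of_injective, card_range]
  intro a b hab
  have := Nat.eq_of_mul_eq_mul_left (by omega : 0 < 2 * k + 1) hab
  omega

theorem sum_moebius_odd_mul_div_eq_one (n : ℕ) :
    ∑ k ∈ range (n + 1), (μ (2 * k + 1) : ℤ) * ((n + k + 1) / (2 * k + 1) : ℕ) = 1 := by
  set s := (range (2 * n + 2)).filter Odd with hs
  have hodd : ∀ m ∈ s, Odd m := fun m hm => (mem_filter.mp hm).2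
  have key := sum_moebius_mul_card_multiples (s := s)
    (fun h => Nat.not_odd_zero (hodd 0 h))
    (fun m hm d hd => by
      obtain ⟨hdm, -⟩ := Nat.mem_divisors.mp hd
      simp only [s, mem_filter, mem_range] at hm ⊢
      exact ⟨(Nat.le_of_dvd hm.2.pos hdm).trans_lt hm.1, hm.2.of_dvd_nat hdm⟩)
  have hreindex := sum_image (s := range (n + 1)) (g := fun k => 2 * k + 1)
    (f := fun d => (μ d : ℤ) * #(s.filter (d ∣ ·))) (fun a _ b _ h => by simp only at h; omega)
  rw [← filter_odd_range_eq_image, ← hs] at hreindex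
  rw [if_pos (by simp [s]), hreindex] at key
  simpa only [s, card_filter_dvd_filter_odd_range] using key

theorem abs_moebius_mul_div_sub_le (a d : ℕ) :
    |(μ d : ℝ) * ((a : ℝ) / d - (a / d : ℕ))| ≤ 1 := by
  have hμ : |(μ d : ℝ)| ≤ 1 := by exact_mod_cast abs_moebius_le_one
  have hfloor := Nat.floor_div_eq_div (K := ℝ) a d
  have hlo : ((a / d : ℕ) : ℝ) ≤ a / d := hfloor ▸ Nat.floor_le (by positivity)
  have hhi : (a : ℝ) / d < (a / d : ℕ) + 1 := hfloor ▸ Nat.lt_floor_add_one _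
  rw [abs_mul]
  exact mul_le_one₀ hμ (abs_nonneg _) (abs_le.mpr ⟨by linarith, by linarith⟩)

theorem abs_sum_range_le_of_eq_zero_of_abs_le_one {F : ℕ → ℝ} {n : ℕ} (hn : 1 ≤ n)
    (h0 : F 0 = 0) (hn0 : F n = 0) (hF : ∀ k, |F k| ≤ 1) :
    |∑ k ∈ range (n + 1), F k| ≤ n - 1 := by
  obtain ⟨m, rfl⟩ : ∃ m, n = m + 1 := ⟨n - 1, by omega⟩
  rw [sum_range_succ, sum_range_succ', hn0, h0, add_zero, add_zero]
  calc |∑ k ∈ range m, F (k + 1)| ≤ ∑ k ∈ range m, |F (k + 1)| := abs_sum_le_sum_abs _ _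
    _ ≤ ∑ _k ∈ range m, (1 : ℝ) := sum_le_sum fun k _ => hF (k + 1)
    _ = ((m + 1 : ℕ) : ℝ) - 1 := by simp

open ArithmeticFunction ArithmeticFunction.Moebius in
theorem stmt_14 (n : ℕ) (hn : 1 ≤ n) :
    -(n : ℝ) + 2 ≤ ∑ k ∈ Finset.range (n + 1),
        (μ (2 * k + 1) : ℝ) * ((n : ℝ) + k + 1) / (2 * k + 1) ∧
    ∑ k ∈ Finset.range (n + 1),
        (μ (2 * k + 1) : ℝ) * ((n : ℝ) + k + 1) / (2 * k + 1) ≤ (n : ℝ) := by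
  set F : ℕ → ℝ := fun k =>
    (μ (2 * k + 1) : ℝ) * (((n + k + 1 : ℕ) : ℝ) / (2 * k + 1 : ℕ) - ((n + k + 1) / (2 * k + 1) : ℕ))
  have hkey : ∑ k ∈ range (n + 1), (μ (2 * k + 1) : ℝ) * ((n + k + 1) / (2 * k + 1) : ℕ) = 1 := by
    have := congrArg (Int.cast : ℤ → ℝ) (sum_moebius_odd_mul_div_eq_one n)
    push_cast at this
    exact this
  have hsplit : ∑ k ∈ range (n + 1), (μ (2 * k + 1) : ℝ) * ((n : ℝ) + k + 1) / (2 * k + 1)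
      = 1 + ∑ k ∈ range (n + 1), F k := by
    have hterm : ∀ k, (μ (2 * k + 1) : ℝ) * ((n : ℝ) + k + 1) / (2 * k + 1)
        = (μ (2 * k + 1) : ℝ) * ((n + k + 1) / (2 * k + 1) : ℕ) + F k := fun k => by
      simp only [F]
      push_cast
      ring
    simp only [hterm, sum_add_distrib, hkey]
  have herr : |∑ k ∈ range (n + 1), F k| ≤ n - 1 := by
    refine abs_sum_range_le_of_eq_zero_of_abs_le_one hn (by simp [F]) ?_
      fun k => abs_moebius_mul_div_sub_le _ _
    have : n + n + 1 = 2 * n + 1 := by ring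
    have hpos : ((2 * n + 1 : ℕ) : ℝ) ≠ 0 := by positivity
    simp only [F, this, Nat.div_self (Nat.succ_pos _), Nat.cast_one, div_self hpos, sub_self,
      mul_zero]
  rw [hsplit]
  constructor <;> linarith [(abs_le.mp herr).1, (abs_le.mp herr).2]
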